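/- arXiv:2010.08878 — 5 statements merged into one kernel-verified Lean document; each statement's English description precedes it below -/
import Mathlib

section
/- Let H be a class of finite simple graphs, closed under graph isomorphism, satisfying the following two conditions: (i) for every graph G in H and every vertex x of G, the induced subgraph G \ N_G[x] belongs to H; (ii) every graph G in H having no isolated vertex admits a minimal vertex cover of cardinality at least |V(G)|/2. Then for every graph G in H and every integer k ≥ 1, deg(J(G)^{(k)}) = k · deg(J(G)). -/
open MvPolynomial

/-- `C` is a vertex cover of `G`: every edge is incident to a vertex of `C`. -/
def IsVertexCover {V : Type*} (G : SimpleGraph V) (C : Set V) : Prop :=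
  ∀ ⦃a b : V⦄, G.Adj a b → a ∈ C ∨ b ∈ C

/-- `C` is a minimal vertex cover of `G`. -/
def IsMinVertexCover {V : Type*} (G : SimpleGraph V) (C : Set V) : Prop :=
  IsVertexCover G C ∧ ∀ D : Set V, D ⊂ C → ¬ IsVertexCover G D

/-- `A` is an independent set of `G`. -/
def IsIndepSet {V : Type*} (G : SimpleGraph V) (A : Set V) : Prop :=
  ∀ ⦃a⦄, a ∈ A → ∀ ⦃b⦄, b ∈ A → ¬ G.Adj a b

/-- `A` is a maximal independent set of `G`. -/
def IsMaxIndepSet {V : Type*} (G : SimpleGraph V) (A : Set V) : Prop :=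
  IsIndepSet G A ∧ ∀ B : Set V, IsIndepSet G B → A ⊆ B → A = B

/-- A graph is unmixed if all maximal independent sets have the same cardinality. -/
def Unmixed {V : Type*} (G : SimpleGraph V) : Prop :=
  ∀ A B : Set V, IsMaxIndepSet G A → IsMaxIndepSet G B → A.ncard = B.ncard

/-- `G` has no isolated vertices. -/
def HasNoIsolatedVertex {V : Type*} (G : SimpleGraph V) : Prop :=
  ∀ v : V, ∃ w : V, G.Adj v w

/-- `G` is very well-covered: no isolated vertices, an even number of vertices, and every
maximal independent set has cardinality half the number of vertices. -/
def VeryWellCovered {V : Type*} [Fintype V] (G : SimpleGraph V) : Prop :=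
  HasNoIsolatedVertex G ∧ Even (Fintype.card V) ∧
    ∀ A : Set V, IsMaxIndepSet G A → 2 * A.ncard = Fintype.card V

/-- `G` is claw-free: it has no induced subgraph isomorphic to `K_{1,3}`. -/
def ClawFree {V : Type*} (G : SimpleGraph V) : Prop :=
  ¬ ∃ a b c d : V, G.Adj a b ∧ G.Adj a c ∧ G.Adj a d ∧
      ¬ G.Adj b c ∧ ¬ G.Adj b d ∧ ¬ G.Adj c d ∧ b ≠ c ∧ b ≠ d ∧ c ≠ d

/-- The graph obtained from `G` by deleting the vertices in `A`: it has the same vertex set,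
and its edges are the edges of `G` avoiding `A` (so the vertices of `A` become isolated). -/
def deleteVerts {V : Type*} (G : SimpleGraph V) (A : Set V) : SimpleGraph V where
  Adj a b := G.Adj a b ∧ a ∉ A ∧ b ∉ A
  symm := ⟨fun a b ⟨h1, h2, h3⟩ => ⟨h1.symm, h3, h2⟩⟩
  loopless := ⟨fun a h => G.loopless.irrefl a h.1⟩

/-- The closed neighborhood `N_G[F]` of a set of vertices `F`. -/
def closedNbhdSet {V : Type*} (G : SimpleGraph V) (F : Set V) : Set V :=
  ⋃ a ∈ F, insert a (G.neighborSet a)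

/-- The cover ideal `J(G)` of the graph `G`:
the intersection of the ideals `(x_i, x_j)` over the edges `{x_i, x_j}` of `G`. -/
noncomputable def coverIdeal (K : Type*) [Field K] {V : Type*} (G : SimpleGraph V) :
    Ideal (MvPolynomial V K) :=
  ⨅ (p : V × V) (_ : G.Adj p.1 p.2), Ideal.span {X p.1, X p.2}

/-- The `k`-th symbolic power `J(G)^{(k)}` of the cover ideal of `G`:
the intersection of the ideals `(x_i, x_j)^k` over the edges `{x_i, x_j}` of `G`
(the empty intersection being the unit ideal). -/
noncomputable def symbPow (K : Type*) [Field K] {V : Type*} (G : SimpleGraph V) (k : ℕ) :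
    Ideal (MvPolynomial V K) :=
  ⨅ (p : V × V) (_ : G.Adj p.1 p.2), Ideal.span {X p.1, X p.2} ^ k

/-- The degree of a monomial with exponent vector `m`. -/
def mdeg {V : Type*} (m : V →₀ ℕ) : ℕ := m.sum fun _ e => e

/-- The monomial with exponent vector `m` is a minimal monomial generator of `I`. -/
def IsMinGen {K : Type*} [Field K] {V : Type*} (I : Ideal (MvPolynomial V K)) (m : V →₀ ℕ) :
    Prop :=
  (monomial m (1 : K)) ∈ I ∧
    ∀ i : V, m i ≠ 0 → (monomial (m - Finsupp.single i 1) (1 : K)) ∉ I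

/-- `deg I`: the maximum degree of a minimal monomial generator of `I`. -/
noncomputable def genDeg {K : Type*} [Field K] {V : Type*} (I : Ideal (MvPolynomial V K)) : ℕ :=
  sSup {d : ℕ | ∃ m : V →₀ ℕ, IsMinGen I m ∧ mdeg m = d}

/-!
A minimal monomial generator of `J(G)^{(k)}` is `x^m` for a minimal `k`-cover `m` of `G`: a weight
with `m a + m b ≥ k` on every edge and each positive weight on a tight edge. Weight `k` on a minimal
vertex cover is one, so everything reduces to `∑ m ≤ k τ(G)`, where `τ(G)` is the largest size of a
minimal vertex cover. Let `B` be the zero set of `m`. Then `m = k` on `N[B] \ B`, while on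
`G' = G \ N[B]`, a graph of the class without isolated vertices, `m - 1` is a minimal
`(k - 2)`-cover; by induction on `k` and `|V(G')| ≤ 2 τ(G')` its total weight is at most
`(k - 2) τ(G') + 2 τ(G')`. Finally `(N[B] \ B) ∪ D` is a minimal vertex cover of `G` for every
minimal vertex cover `D` of `G'`, whence `|N[B] \ B| + τ(G') ≤ τ(G)`.
-/

section

variable {K : Type*} [Field K] {V : Type*}

lemma aeval_pair_monomial [DecidableEq V] {a b : V} (hab : a ≠ b) (m : V →₀ ℕ) :
    aeval (fun v => if v = a ∨ v = b then (Polynomial.X : Polynomial K) else 1)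
      (monomial m (1 : K)) = Polynomial.X ^ (m a + m b) := by
  induction m using Finsupp.induction with
  | zero => simp
  | single_add v e m _ _ ih =>
    rw [← mul_one (1 : K), ← monomial_mul, map_mul, ih, ← X_pow_eq_monomial, map_pow, aeval_X]
    by_cases hva : v = a
    · subst hva; simp [hab, pow_add, mul_assoc]
    by_cases hvb : v = b
    · subst hvb; simp [hab.symm, pow_add]; ring
    · simp [hva, hvb, Ne.symm hva, Ne.symm hvb]

theorem monomial_mem_span_pair_pow_iff {a b : V} (hab : a ≠ b) (k : ℕ) (m : V →₀ ℕ) :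
    monomial m (1 : K) ∈ Ideal.span {X a, X b} ^ k ↔ k ≤ m a + m b := by
  classical
  constructor
  · intro h
    let φ := aeval (R := K) fun v => if v = a ∨ v = b then (Polynomial.X : Polynomial K) else 1
    have hφ : (Ideal.span {X a, X b} ^ k).map φ = Ideal.span {Polynomial.X ^ k} := by
      simp [Ideal.map_pow, Ideal.map_span, Set.image_pair, φ, hab, Ideal.span_singleton_pow]
    have := Ideal.mem_map_of_mem φ h
    rwa [hφ, Ideal.mem_span_singleton, aeval_pair_monomial hab,
      pow_dvd_pow_iff Polynomial.X_ne_zero Polynomial.not_isUnit_X] at this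
  · intro h
    have hdvd : X a ^ m a * X b ^ m b ∣ monomial m (1 : K) := by
      rw [X_pow_eq_monomial, X_pow_eq_monomial, monomial_mul, monomial_dvd_monomial]
      refine ⟨Or.inr fun v => ?_, by simp⟩
      by_cases hva : v = a
      · subst hva; simp [hab]
      by_cases hvb : v = b
      · subst hvb; simp [hab]
      · simp [Ne.symm hva, Ne.symm hvb]
    refine Ideal.mem_of_dvd _ hdvd (Ideal.pow_le_pow_right h ?_)
    rw [pow_add]
    exact Ideal.mul_mem_mul (Ideal.pow_mem_pow (Ideal.subset_span (by simp)) _)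
      (Ideal.pow_mem_pow (Ideal.subset_span (by simp)) _)

def IsKCover (G : SimpleGraph V) (k : ℕ) (m : V → ℕ) : Prop :=
  ∀ ⦃a b⦄, G.Adj a b → k ≤ m a + m b

/-- Equivalent to minimality among `k`-covers: lowering any positive weight breaks the cover. -/
def IsMinimalKCover (G : SimpleGraph V) (k : ℕ) (m : V → ℕ) : Prop :=
  IsKCover G k m ∧ ∀ ⦃i⦄, m i ≠ 0 → ∃ j, G.Adj i j ∧ m i + m j = k

variable {G : SimpleGraph V} {k : ℕ}

theorem monomial_mem_symbPow_iff (m : V →₀ ℕ) :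
    monomial m (1 : K) ∈ symbPow K G k ↔ IsKCover G k m := by
  simp only [symbPow, Ideal.mem_iInf, Prod.forall]
  exact forall₂_congr fun a b =>
    forall_congr' fun hab => monomial_mem_span_pair_pow_iff hab.ne k m

theorem IsKCover.not_isKCover_tsub_single_iff [DecidableEq V] {m : V →₀ ℕ}
    (hm : IsKCover G k m) {i : V} (hi : m i ≠ 0) :
    ¬ IsKCover G k ⇑(m - Finsupp.single i 1 : V →₀ ℕ) ↔ ∃ j, G.Adj i j ∧ m i + m j = k := by
  simp only [IsKCover, not_forall, not_le, Finsupp.coe_tsub, Pi.sub_apply, Finsupp.single_apply]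
  constructor
  · rintro ⟨a, b, hab, hlt⟩
    have := hm hab
    by_cases hia : i = a
    · subst hia; exact ⟨b, hab, by simp [hab.ne] at hlt; omega⟩
    by_cases hib : i = b
    · subst hib; exact ⟨a, hab.symm, by simp [hia] at hlt; omega⟩
    · simp [hia, hib] at hlt; omega
  · rintro ⟨j, hij, hsum⟩
    exact ⟨i, j, hij, by simp [hij.ne]; omega⟩

theorem isMinGen_symbPow_iff (m : V →₀ ℕ) :
    IsMinGen (symbPow K G k) m ↔ IsMinimalKCover G k m := by
  classical
  simp only [IsMinGen, IsMinimalKCover, monomial_mem_symbPow_iff]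
  exact and_congr_right fun hm =>
    forall_congr' fun _ => forall_congr' fun hi => hm.not_isKCover_tsub_single_iff hi

theorem isMinVertexCover_iff_minimal {C : Set V} :
    IsMinVertexCover G C ↔ Minimal (IsVertexCover G) C :=
  Set.minimal_iff_forall_ssubset.symm

theorem isMinVertexCover_iff {C : Set V} :
    IsMinVertexCover G C ↔ IsVertexCover G C ∧ ∀ v ∈ C, ∃ w, G.Adj v w ∧ w ∉ C := by
  refine and_congr_right fun hC => ⟨fun hmin v hv => ?_, fun hloc D hD hDC => ?_⟩
  · by_contra! hv'
    refine hmin (C \ {v}) (Set.sdiff_singleton_ssubset.mpr hv) fun a b hab => ?_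
    rcases hC hab with ha | hb
    · by_cases hav : a = v
      · subst hav; exact .inr ⟨hv' b hab, hab.ne.symm⟩
      · exact .inl ⟨ha, hav⟩
    · by_cases hbv : b = v
      · subst hbv; exact .inl ⟨hv' a hab.symm, hab.ne⟩
      · exact .inr ⟨hb, hbv⟩
  · obtain ⟨v, hvC, hvD⟩ := Set.exists_of_ssubset hD
    obtain ⟨w, hvw, hwC⟩ := hloc v hvC
    exact (hDC hvw).elim hvD fun hwD => hwC (hD.subset hwD)

theorem exists_isMinVertexCover [Finite V] (G : SimpleGraph V) : ∃ C, IsMinVertexCover G C := by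
  obtain ⟨C, -, hC⟩ := exists_minimal_le_of_wellFoundedLT (IsVertexCover G) Set.univ
    fun _ _ _ => .inl trivial
  exact ⟨C, isMinVertexCover_iff_minimal.mpr hC⟩

noncomputable def maxMinVertexCoverCard (G : SimpleGraph V) : ℕ :=
  sSup {n | ∃ C, IsMinVertexCover G C ∧ C.ncard = n}

theorem bddAbove_minVertexCover_ncard [Finite V] (G : SimpleGraph V) :
    BddAbove {n | ∃ C, IsMinVertexCover G C ∧ C.ncard = n} :=
  ⟨Nat.card V, by rintro _ ⟨C, -, rfl⟩; exact Set.ncard_le_card C⟩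

theorem IsMinVertexCover.ncard_le_maxMinVertexCoverCard [Finite V] {C : Set V}
    (hC : IsMinVertexCover G C) : C.ncard ≤ maxMinVertexCoverCard G :=
  le_csSup (bddAbove_minVertexCover_ncard G) ⟨C, hC, rfl⟩

theorem exists_isMinVertexCover_ncard_eq [Finite V] (G : SimpleGraph V) :
    ∃ C, IsMinVertexCover G C ∧ C.ncard = maxMinVertexCoverCard G := by
  obtain ⟨C, hC⟩ := exists_isMinVertexCover G
  exact Nat.sSup_mem (s := {n | ∃ C, IsMinVertexCover G C ∧ C.ncard = n}) ⟨_, C, hC, rfl⟩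
    (bddAbove_minVertexCover_ncard G)

theorem closedNbhdSet_empty : closedNbhdSet G ∅ = ∅ := by
  simp [closedNbhdSet]

theorem closedNbhdSet_insert (x : V) (B : Set V) :
    closedNbhdSet G (insert x B) = insert x (G.neighborSet x) ∪ closedNbhdSet G B :=
  Set.biUnion_insert x B _

theorem mem_closedNbhdSet {B : Set V} {v : V} :
    v ∈ closedNbhdSet G B ↔ ∃ b ∈ B, v = b ∨ G.Adj b v := by
  simp [closedNbhdSet]

theorem isMinVertexCover_closedNbhdSet_diff_union_image {B : Set V} (hB : IsIndepSet G B)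
    {D : Set ((closedNbhdSet G B)ᶜ : Set V)}
    (hD : IsMinVertexCover (G.induce (closedNbhdSet G B)ᶜ) D) :
    IsMinVertexCover G ((closedNbhdSet G B \ B) ∪ Subtype.val '' D) := by
  have nbhd_of_adj : ∀ ⦃a b⦄, G.Adj a b → a ∈ B → b ∈ closedNbhdSet G B \ B :=
    fun a b hab ha => ⟨mem_closedNbhdSet.2 ⟨a, ha, .inr hab⟩, fun hb => hB ha hb hab⟩
  rw [isMinVertexCover_iff] at hD ⊢
  constructor
  · intro a b hab
    by_cases haB : a ∈ B
    · exact .inr (.inl (nbhd_of_adj hab haB))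
    by_cases hbB : b ∈ B
    · exact .inl (.inl (nbhd_of_adj hab.symm hbB))
    by_cases ha : a ∈ closedNbhdSet G B
    · exact .inl (.inl ⟨ha, haB⟩)
    by_cases hb : b ∈ closedNbhdSet G B
    · exact .inr (.inl ⟨hb, hbB⟩)
    rcases hD.1 (show (G.induce _).Adj ⟨a, ha⟩ ⟨b, hb⟩ from hab) with h | h
    · exact .inl (.inr ⟨_, h, rfl⟩)
    · exact .inr (.inr ⟨_, h, rfl⟩)
  · rintro v (⟨hv, hvB⟩ | ⟨w, hwD, rfl⟩)
    · obtain ⟨b, hb, rfl | hbv⟩ := mem_closedNbhdSet.1 hv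
      · exact absurd hb hvB
      refine ⟨b, hbv.symm, ?_⟩
      rintro (⟨-, hbB⟩ | ⟨w, -, hwb⟩)
      · exact hbB hb
      · exact w.2 (hwb ▸ mem_closedNbhdSet.2 ⟨b, hb, .inl rfl⟩)
    · obtain ⟨w', hww', hw'D⟩ := hD.2 w hwD
      refine ⟨w', hww', ?_⟩
      rintro (⟨hw', -⟩ | ⟨w'', hw''D, hw''⟩)
      · exact w'.2 hw'
      · exact hw'D (Subtype.val_injective hw'' ▸ hw''D)

theorem ncard_closedNbhdSet_diff_add_maxMinVertexCoverCard_le [Finite V] {B : Set V}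
    (hB : IsIndepSet G B) :
    (closedNbhdSet G B \ B).ncard + maxMinVertexCoverCard (G.induce (closedNbhdSet G B)ᶜ) ≤
      maxMinVertexCoverCard G := by
  obtain ⟨D, hD, hDcard⟩ := exists_isMinVertexCover_ncard_eq (G.induce (closedNbhdSet G B)ᶜ)
  have hdisj : Disjoint (closedNbhdSet G B \ B) (Subtype.val '' D) :=
    Set.disjoint_left.2 fun v hv ⟨w, _, hwv⟩ => w.2 (hwv ▸ hv.1)
  have := (isMinVertexCover_closedNbhdSet_diff_union_image hB hD).ncard_le_maxMinVertexCoverCard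
  rwa [Set.ncard_union_eq hdisj, Set.ncard_image_of_injective _ Subtype.val_injective,
    hDcard] at this

section KCover

variable {m : V → ℕ}

theorem IsMinimalKCover.apply_le (hm : IsMinimalKCover G k m) (v : V) : m v ≤ k := by
  by_cases hv : m v = 0
  · omega
  obtain ⟨u, -, hu⟩ := hm.2 hv
  omega

theorem IsKCover.isIndepSet_zeros (hm : IsKCover G k m) (hk : 0 < k) :
    IsIndepSet G {v | m v = 0} := fun a ha b hb hab => by
  have := hm hab
  simp_all

theorem mem_compl_closedNbhdSet_zeros {v : V} :
    v ∈ (closedNbhdSet G {u | m u = 0})ᶜ ↔ m v ≠ 0 ∧ ∀ u, G.Adj v u → m u ≠ 0 := by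
  simp only [Set.mem_compl_iff, mem_closedNbhdSet, Set.mem_ofPred_eq, not_exists, not_and, not_or]
  exact ⟨fun h => ⟨fun hv => (h v hv).1 rfl, fun u hvu hu => (h u hu).2 hvu.symm⟩,
    fun h u hu => ⟨fun huv => h.1 (huv ▸ hu), fun huv => h.2 u huv.symm hu⟩⟩

theorem IsMinimalKCover.eq_of_mem_closedNbhdSet_diff (hm : IsMinimalKCover G k m) {v : V}
    (hv : v ∈ closedNbhdSet G {u | m u = 0} \ {u | m u = 0}) : m v = k := by
  obtain ⟨⟨b, hb, rfl | hbv⟩, hv0⟩ := mem_closedNbhdSet.1 hv.1, hv.2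
  · exact absurd hb hv0
  · have hb0 : m b = 0 := hb
    have := hm.1 hbv
    have := hm.apply_le v
    omega

theorem IsMinimalKCover.exists_tight_mem_compl (hm : IsMinimalKCover G k m) {v : V}
    (hv : v ∈ (closedNbhdSet G {u | m u = 0})ᶜ) :
    ∃ u ∈ (closedNbhdSet G {u | m u = 0})ᶜ, G.Adj v u ∧ m v + m u = k := by
  rw [mem_compl_closedNbhdSet_zeros] at hv
  obtain ⟨u, hvu, hsum⟩ := hm.2 hv.1
  refine ⟨u, mem_compl_closedNbhdSet_zeros.2 ⟨hv.2 u hvu, fun w huw hw => ?_⟩, hvu, hsum⟩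
  have hw0 : m w = 0 := hw
  have := hm.1 huw
  have := hv.1
  omega

theorem IsMinimalKCover.induce_sub_one (hm : IsMinimalKCover G k m) :
    IsMinimalKCover (G.induce (closedNbhdSet G {u | m u = 0})ᶜ) (k - 2) fun v => m v - 1 := by
  constructor
  · intro a b hab
    have := hm.1 (show G.Adj a b from hab)
    have := (mem_compl_closedNbhdSet_zeros.1 a.2).1
    have := (mem_compl_closedNbhdSet_zeros.1 b.2).1
    change k - 2 ≤ (m a - 1) + (m b - 1)
    omega
  · intro v hv
    obtain ⟨u, hu, hvu, hsum⟩ := hm.exists_tight_mem_compl v.2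
    have := (mem_compl_closedNbhdSet_zeros.1 hu).1
    refine ⟨⟨u, hu⟩, hvu, ?_⟩
    change m v - 1 ≠ 0 at hv
    change (m v - 1) + (m u - 1) = k - 2
    omega

theorem IsMinimalKCover.hasNoIsolatedVertex_induce (hm : IsMinimalKCover G k m) :
    HasNoIsolatedVertex (G.induce (closedNbhdSet G {u | m u = 0})ᶜ) := fun v => by
  obtain ⟨u, hu, hvu, -⟩ := hm.exists_tight_mem_compl v.2
  exact ⟨⟨u, hu⟩, hvu⟩

theorem IsMinimalKCover.two_le_of_mem_compl (hm : IsMinimalKCover G k m) {v : V}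
    (hv : v ∈ (closedNbhdSet G {u | m u = 0})ᶜ) : 2 ≤ k := by
  obtain ⟨u, hu, -, hsum⟩ := hm.exists_tight_mem_compl hv
  have := (mem_compl_closedNbhdSet_zeros.1 hv).1
  have := (mem_compl_closedNbhdSet_zeros.1 hu).1
  omega

open Classical in
theorem IsMinimalKCover.sum_eq [Fintype V] (hm : IsMinimalKCover G k m) :
    ∑ v, m v = k * (closedNbhdSet G {u | m u = 0} \ {u | m u = 0}).ncard +
      ∑ v : ↥(closedNbhdSet G {u | m u = 0})ᶜ, m v := by
  set B := {u | m u = 0}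
  have hpt : ∀ v, m v = (if v ∈ closedNbhdSet G B \ B then k else 0) +
      if v ∈ (closedNbhdSet G B)ᶜ then m v else 0 := by
    intro v
    by_cases hvC : v ∈ (closedNbhdSet G B)ᶜ
    · have : v ∉ closedNbhdSet G B \ B := fun h => hvC h.1
      simp [hvC, this]
    by_cases hvB : v ∈ B
    · have hv0 : m v = 0 := hvB
      simp [hvB, hvC, hv0]
    · have hv : v ∈ closedNbhdSet G B \ B := ⟨not_not.1 hvC, hvB⟩
      simp [hv, hvC, hm.eq_of_mem_closedNbhdSet_diff hv]
  rw [Finset.sum_congr rfl fun v _ => hpt v, Finset.sum_add_distrib, ← Finset.sum_filter,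
    ← Finset.sum_filter, Set.filter_mem_univ_eq_toFinset,
    Set.filter_mem_univ_eq_toFinset, Finset.sum_const, smul_eq_mul, mul_comm,
    Set.ncard_eq_toFinset_card', Finset.sum_set_coe]

end KCover

theorem IsMinVertexCover.isMinimalKCover_indicator {C : Set V} (hC : IsMinVertexCover G C)
    (k : ℕ) : IsMinimalKCover G k (C.indicator fun _ => k) := by
  rw [isMinVertexCover_iff] at hC
  refine ⟨fun a b hab => ?_, fun v hv => ?_⟩
  · rcases hC.1 hab with h | h <;> simp [h]
  · have hvC : v ∈ C := by by_contra h; simp [h] at hv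
    obtain ⟨w, hvw, hwC⟩ := hC.2 v hvC
    exact ⟨w, hvw, by simp [hvC, hwC]⟩

theorem mdeg_eq_sum [Fintype V] (m : V →₀ ℕ) : mdeg m = ∑ v, m v :=
  Finsupp.sum_fintype _ _ fun _ => rfl

end

theorem induce_compl_closedNbhdSet_mem {H : ∀ (V : Type) [Finite V], SimpleGraph V → Prop}
    (Hiso : ∀ (V W : Type) [Finite V] [Finite W] (G : SimpleGraph V) (G' : SimpleGraph W),
      Nonempty (G ≃g G') → H V G → H W G')
    (Hdel : ∀ (V : Type) [Finite V] (G : SimpleGraph V) (x : V), H V G →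
      H ((insert x (G.neighborSet x))ᶜ : Set V) (G.induce ((insert x (G.neighborSet x))ᶜ)))
    {V : Type} [Finite V] {G : SimpleGraph V} (hG : H V G) {B : Set V} (hB : IsIndepSet G B) :
    H ((closedNbhdSet G B)ᶜ : Set V) (G.induce (closedNbhdSet G B)ᶜ) := by
  induction B, B.toFinite using Set.Finite.induction_on with
  | empty =>
    rw [closedNbhdSet_empty, Set.compl_empty]
    exact Hiso _ _ _ _ ⟨(SimpleGraph.induceUnivIso G).symm⟩ hG
  | @insert x B hxB _ ih =>
    set C := (closedNbhdSet G B)ᶜ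
    have hxC : x ∈ C := by
      simp only [C, Set.mem_compl_iff, mem_closedNbhdSet, not_exists, not_and, not_or]
      exact fun b hb =>
        ⟨fun h => hxB (h ▸ hb), hB (Set.mem_insert_of_mem x hb) (Set.mem_insert x B)⟩
    have hdel := Hdel C (G.induce C) ⟨x, hxC⟩ (ih fun a ha b hb => hB (.inr ha) (.inr hb))
    refine Hiso _ _ _ _ ⟨?_⟩ hdel
    let e := (SimpleGraph.Embedding.induce (G := G) C).comp (SimpleGraph.Embedding.induce
      (insert (⟨x, hxC⟩ : C) ((G.induce C).neighborSet ⟨x, hxC⟩))ᶜ)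
    have hrange : Set.range e = (closedNbhdSet G (insert x B))ᶜ := by
      have he : ∀ w, e w = w.1.1 := fun _ => rfl
      ext v
      simp only [Set.mem_range, he, Subtype.exists, exists_prop, exists_and_right, exists_eq_right]
      simp only [C, closedNbhdSet_insert, Set.mem_compl_iff, Set.mem_union, Set.mem_insert_iff,
        SimpleGraph.induce_adj, SimpleGraph.mem_neighborSet, Subtype.mk.injEq, exists_prop]
      tauto
    exact hrange ▸ e.isoInduceRange

theorem IsMinimalKCover.sum_le_mul_maxMinVertexCoverCard
    {H : ∀ (V : Type) [Finite V], SimpleGraph V → Prop}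
    (Hind : ∀ (V : Type) [Finite V] (G : SimpleGraph V) (B : Set V), H V G → IsIndepSet G B →
      H ((closedNbhdSet G B)ᶜ : Set V) (G.induce (closedNbhdSet G B)ᶜ))
    (Hcover : ∀ (V : Type) [Finite V] (G : SimpleGraph V), H V G → HasNoIsolatedVertex G →
      ∃ C : Set V, IsMinVertexCover G C ∧ Nat.card V ≤ 2 * C.ncard)
    {V : Type} [Fintype V] {G : SimpleGraph V} (hG : H V G) {k : ℕ} {m : V → ℕ}
    (hm : IsMinimalKCover G k m) : ∑ v, m v ≤ k * maxMinVertexCoverCard G := by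
  classical
  induction k using Nat.strong_induction_on generalizing V with
  | _ k ih =>
  rcases Nat.eq_zero_or_pos k with rfl | hk
  · simp [fun v => Nat.le_zero.1 (hm.apply_le v)]
  set B := {v | m v = 0}
  set C := (closedNbhdSet G B)ᶜ
  have hB : IsIndepSet G B := hm.1.isIndepSet_zeros hk
  have hGC : H C (G.induce C) := Hind V G B hG hB
  have hsumC : ∑ v : C, m v ≤ k * maxMinVertexCoverCard (G.induce C) := by
    rcases isEmpty_or_nonempty C with hC | ⟨⟨v, hv⟩⟩
    · simp
    have h2k : 2 ≤ k := hm.two_le_of_mem_compl hv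
    have hcard : Fintype.card C ≤ 2 * maxMinVertexCoverCard (G.induce C) := by
      obtain ⟨D, hD, hDcard⟩ := Hcover C (G.induce C) hGC hm.hasNoIsolatedVertex_induce
      rw [← Nat.card_eq_fintype_card]
      exact hDcard.trans (Nat.mul_le_mul_left 2 hD.ncard_le_maxMinVertexCoverCard)
    have hlow : ∀ v : C, m v = (m v - 1) + 1 := fun v =>
      (Nat.sub_add_cancel (Nat.one_le_iff_ne_zero.2 (mem_compl_closedNbhdSet_zeros.1 v.2).1)).symm
    calc ∑ v : C, m v = ∑ v : C, (m v - 1) + Fintype.card C := by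
          rw [Finset.sum_congr rfl fun v _ => hlow v, Finset.sum_add_distrib, Finset.sum_const,
            smul_eq_mul, mul_one, Finset.card_univ]
      _ ≤ (k - 2) * maxMinVertexCoverCard (G.induce C) +
            2 * maxMinVertexCoverCard (G.induce C) :=
          add_le_add (ih (k - 2) (by omega) hGC hm.induce_sub_one) hcard
      _ = k * maxMinVertexCoverCard (G.induce C) := by rw [← add_mul, Nat.sub_add_cancel h2k]
  calc ∑ v, m v = k * (closedNbhdSet G B \ B).ncard + ∑ v : C, m v := hm.sum_eq
    _ ≤ k * ((closedNbhdSet G B \ B).ncard + maxMinVertexCoverCard (G.induce C)) := by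
        rw [mul_add]; gcongr
    _ ≤ k * maxMinVertexCoverCard G :=
        Nat.mul_le_mul_left k (ncard_closedNbhdSet_diff_add_maxMinVertexCoverCard_le hB)

theorem genDeg_symbPow {K : Type*} [Field K]
    {H : ∀ (V : Type) [Finite V], SimpleGraph V → Prop}
    (Hind : ∀ (V : Type) [Finite V] (G : SimpleGraph V) (B : Set V), H V G → IsIndepSet G B →
      H ((closedNbhdSet G B)ᶜ : Set V) (G.induce (closedNbhdSet G B)ᶜ))
    (Hcover : ∀ (V : Type) [Finite V] (G : SimpleGraph V), H V G → HasNoIsolatedVertex G →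
      ∃ C : Set V, IsMinVertexCover G C ∧ Nat.card V ≤ 2 * C.ncard)
    {V : Type} [Finite V] {G : SimpleGraph V} (hG : H V G) (k : ℕ) :
    genDeg (symbPow K G k) = k * maxMinVertexCoverCard G := by
  classical
  have := Fintype.ofFinite V
  refine IsGreatest.csSup_eq ⟨?_, ?_⟩
  · obtain ⟨C, hC, hcard⟩ := exists_isMinVertexCover_ncard_eq G
    refine ⟨Finsupp.equivFunOnFinite.symm (C.indicator fun _ => k),
      (isMinGen_symbPow_iff _).2 (hC.isMinimalKCover_indicator k), ?_⟩
    simp [mdeg_eq_sum, Set.indicator_apply, Finset.sum_ite, ← hcard, Set.ncard_eq_toFinset_card',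
      mul_comm]
  · rintro _ ⟨m, hm, rfl⟩
    rw [mdeg_eq_sum]
    exact ((isMinGen_symbPow_iff m).1 hm).sum_le_mul_maxMinVertexCoverCard Hind Hcover hG

theorem statement0_general (K : Type) [Field K]
    (H : ∀ (V : Type) [Finite V], SimpleGraph V → Prop)
    (Hiso : ∀ (V W : Type) [Finite V] [Finite W] (G : SimpleGraph V) (G' : SimpleGraph W),
      Nonempty (G ≃g G') → H V G → H W G')
    (Hdel : ∀ (V : Type) [Finite V] (G : SimpleGraph V) (x : V), H V G →
      H ((insert x (G.neighborSet x))ᶜ : Set V) (G.induce ((insert x (G.neighborSet x))ᶜ)))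
    (Hcover : ∀ (V : Type) [Finite V] (G : SimpleGraph V), H V G → HasNoIsolatedVertex G →
      ∃ C : Set V, IsMinVertexCover G C ∧ Nat.card V ≤ 2 * C.ncard)
    (V : Type) [Finite V] (G : SimpleGraph V) (hG : H V G) (k : ℕ) :
    genDeg (symbPow K G k) = k * genDeg (coverIdeal K G) := by
  have Hind : ∀ (V : Type) [Finite V] (G : SimpleGraph V) (B : Set V), H V G → IsIndepSet G B →
      H ((closedNbhdSet G B)ᶜ : Set V) (G.induce (closedNbhdSet G B)ᶜ) :=
    fun _ _ _ _ hG hB => induce_compl_closedNbhdSet_mem Hiso Hdel hG hB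
  have hJ : coverIdeal K G = symbPow K G 1 := by simp [coverIdeal, symbPow]
  rw [hJ, genDeg_symbPow Hind Hcover hG, genDeg_symbPow Hind Hcover hG, one_mul]

/-- Theorem `deg`: if `H` is a class of finite simple graphs closed under
isomorphism, closed under deletion of closed neighborhoods of vertices, and such that every
graph in `H` without isolated vertices admits a minimal vertex cover of cardinality at least
half the number of vertices, then `deg (J(G)^{(k)}) = k * deg (J(G))` for every `G ∈ H` and
every `k ≥ 1`. -/
theorem statement0 (K : Type) [Field K]
    (H : ∀ (V : Type) [Finite V], SimpleGraph V → Prop)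
    (Hiso : ∀ (V W : Type) [Finite V] [Finite W] (G : SimpleGraph V) (G' : SimpleGraph W),
      Nonempty (G ≃g G') → H V G → H W G')
    (Hdel : ∀ (V : Type) [Finite V] (G : SimpleGraph V) (x : V), H V G →
      H ((insert x (G.neighborSet x))ᶜ : Set V) (G.induce ((insert x (G.neighborSet x))ᶜ)))
    (Hcover : ∀ (V : Type) [Finite V] (G : SimpleGraph V), H V G → HasNoIsolatedVertex G →
      ∃ C : Set V, IsMinVertexCover G C ∧ Nat.card V ≤ 2 * C.ncard)
    (V : Type) [Finite V] (G : SimpleGraph V) (hG : H V G) (k : ℕ) (hk : 1 ≤ k) :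
    genDeg (symbPow K G k) = k * genDeg (coverIdeal K G) :=
  statement0_general K H Hiso Hdel Hcover V G hG k
end

section
/- Let G be a finite simple graph with vertex set V(G) = {x_1, …, x_n}, let x be a vertex of G, let u = ∏_{x_i ∈ N_G(x)} x_i, and let J' be the ideal of S generated by the cover ideal of the induced subgraph G \ N_G[x]. Then for every integer k ≥ 1, J(G)^{(k)} + (x) = u^k · J'^{(k)} + (x), where J'^{(k)} = ⋂_{{x_i,x_j} ∈ E(G \ N_G[x])} (x_i, x_j)^k (an empty intersection is the unit ideal). -/
open MvPolynomial

/-!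
All ideals involved are monomial ideals: `(x_a, x_b)^k` is spanned by the monomials `x^d` with
`d a + d b ≥ k`, so `J(G)^{(k)}` is spanned by the `x^d` satisfying this along every edge of `G`.
Modulo `x` only the monomials with `d x = 0` matter; for them the edges at `x` force `d i ≥ k` for
every neighbour `i`, so `u^k ∣ x^d` and the quotient still satisfies the edge condition on
`G \ N_G[x]`. Conversely, `u^k` supplies the exponent `k` on every edge meeting `N_G(x)`, and every
other edge of `G` misses `x` too, hence lies in `G \ N_G[x]`.
-/

open scoped Pointwise

namespace MvPolynomial

variable {σ R : Type*} [CommSemiring R]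

theorem mem_ideal_span_monomial_image_of_isUpperSet {s : Set (σ →₀ ℕ)} (hs : IsUpperSet s)
    {f : MvPolynomial σ R} :
    f ∈ Ideal.span ((fun d => monomial d (1 : R)) '' s) ↔ ∀ d ∈ f.support, d ∈ s := by
  rw [mem_ideal_span_monomial_image]
  exact forall₂_congr fun d _ =>
    ⟨fun ⟨_, he, hed⟩ => hs hed he, fun hd => ⟨d, hd, le_rfl⟩⟩

theorem span_X_pair_pow {a b : σ} (hab : a ≠ b) (k : ℕ) :
    Ideal.span {X a, X b} ^ k =
      Ideal.span ((fun d => monomial d (1 : R)) '' {d | k ≤ d a + d b}) := by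
  classical
  refine le_antisymm ?_ (Ideal.span_le.2 ?_)
  · induction k with
    | zero =>
      rw [pow_zero, Ideal.one_eq_top, top_le_iff, Ideal.eq_top_iff_one]
      exact Ideal.subset_span ⟨0, Nat.zero_le _, by simp⟩
    | succ k ih =>
      calc Ideal.span {X a, X b} ^ (k + 1)
          = Ideal.span {X a, X b} * Ideal.span {X a, X b} ^ k := pow_succ' _ _
        _ ≤ Ideal.span {X a, X b} *
              Ideal.span ((fun d => monomial d 1) '' {d | k ≤ d a + d b}) :=
          Ideal.mul_mono_right ih
        _ = Ideal.span ({X a, X b} * (fun d => monomial d 1) '' {d | k ≤ d a + d b}) :=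
          Ideal.span_mul_span' _ _
        _ ≤ _ := by
          refine Ideal.span_mono ?_
          rintro _ ⟨p, hp, _, ⟨d, hd, rfl⟩, rfl⟩
          rcases hp with rfl | rfl <;>
          · refine ⟨d + Finsupp.single _ 1, ?_,
              by dsimp only; rw [monomial_add_single, pow_one, mul_comm]⟩
            simp only [Set.mem_ofPred_eq, Finsupp.add_apply, Finsupp.single_apply] at hd ⊢
            split_ifs <;> omega
  · rintro _ ⟨d, hd, rfl⟩
    obtain ⟨i, j, rfl, hia, hjb⟩ : ∃ i j, i + j = k ∧ i ≤ d a ∧ j ≤ d b := by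
      have : k ≤ d a + d b := hd
      exact ⟨min (d a) k, k - min (d a) k, by omega, min_le_left _ _, by omega⟩
    have hmem :
        X a ^ i * X b ^ j ∈ Ideal.span ({X a, X b} : Set (MvPolynomial σ R)) ^ (i + j) := by
      rw [pow_add]
      exact Ideal.mul_mem_mul
        (Ideal.pow_mem_pow (Ideal.subset_span (by simp)) _)
        (Ideal.pow_mem_pow (Ideal.subset_span (by simp)) _)
    refine Ideal.mem_of_dvd _ ?_ hmem
    rw [X_pow_eq_monomial, X_pow_eq_monomial, monomial_mul, one_mul, monomial_dvd_monomial]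
    refine ⟨Or.inr fun v => ?_, dvd_rfl⟩
    simp only [Finsupp.add_apply, Finsupp.single_apply]
    split_ifs <;> subst_vars <;> first | exact absurd rfl hab | omega

theorem mem_span_X_pair_pow_iff {a b : σ} (hab : a ≠ b) {k : ℕ} {f : MvPolynomial σ R} :
    f ∈ Ideal.span {X a, X b} ^ k ↔ ∀ d ∈ f.support, k ≤ d a + d b := by
  rw [span_X_pair_pow hab, mem_ideal_span_monomial_image_of_isUpperSet]
  · rfl
  · exact fun d e hde hd => hd.trans (add_le_add (hde a) (hde b))

theorem prod_X_pow_eq_monomial_sum_single (s : Finset σ) (k : ℕ) :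
    (∏ i ∈ s, X i : MvPolynomial σ R) ^ k = monomial (∑ i ∈ s, Finsupp.single i k) 1 := by
  rw [← Finset.prod_pow, monomial_sum_one]
  simp_rw [X_pow_eq_monomial]

end MvPolynomial

section CoverIdeal

variable {V : Type*}

def symbPowExponents (G : SimpleGraph V) (k : ℕ) : Set (V →₀ ℕ) :=
  {d | ∀ ⦃a b⦄, G.Adj a b → k ≤ d a + d b}

theorem isUpperSet_symbPowExponents (G : SimpleGraph V) (k : ℕ) :
    IsUpperSet (symbPowExponents G k) :=
  fun _ _ hde hd _ _ hab => (hd hab).trans (add_le_add (hde _) (hde _))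

theorem symbPow_eq_span (K : Type*) [Field K] (G : SimpleGraph V) (k : ℕ) :
    symbPow K G k = Ideal.span ((fun d => monomial d (1 : K)) '' symbPowExponents G k) := by
  ext f
  rw [mem_ideal_span_monomial_image_of_isUpperSet (isUpperSet_symbPowExponents G k)]
  simp only [symbPow, Ideal.mem_iInf, Prod.forall]
  exact ⟨fun h d hd a b hab => (mem_span_X_pair_pow_iff hab.ne).1 (h a b hab) d hd,
    fun h a b hab => (mem_span_X_pair_pow_iff hab.ne).2 fun d hd => h d hd hab⟩

section Neighborhood

variable (G : SimpleGraph V) (x : V) [Fintype (G.neighborSet x)] (k : ℕ)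

/-- The exponent vector of `u ^ k`, where `u = ∏_{i ∈ N_G(x)} x_i`. -/
noncomputable def nbhdExponent : V →₀ ℕ :=
  ∑ i ∈ G.neighborFinset x, Finsupp.single i k

variable {G x k}

theorem nbhdExponent_apply_of_adj {v : V} (h : G.Adj x v) : nbhdExponent G x k v = k := by
  classical
  simp [nbhdExponent, Finsupp.single_apply, h]

theorem nbhdExponent_apply_of_not_adj {v : V} (h : ¬ G.Adj x v) : nbhdExponent G x k v = 0 := by
  classical
  simp [nbhdExponent, Finsupp.single_apply, h]

theorem nbhdExponent_add_mem_symbPowExponents {d : V →₀ ℕ}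
    (hd : d ∈ symbPowExponents (deleteVerts G (insert x (G.neighborSet x))) k) :
    nbhdExponent G x k + d ∈ symbPowExponents G k := by
  intro a b hab
  simp only [Finsupp.add_apply]
  by_cases ha : G.Adj x a
  · rw [nbhdExponent_apply_of_adj ha]; omega
  by_cases hb : G.Adj x b
  · rw [nbhdExponent_apply_of_adj hb]; omega
  have hax : a ≠ x := by rintro rfl; exact hb hab
  have hbx : b ≠ x := by rintro rfl; exact ha hab.symm
  have := @hd a b ⟨hab, by simp [hax, ha], by simp [hbx, hb]⟩
  omega

theorem nbhdExponent_le {d : V →₀ ℕ} (hd : d ∈ symbPowExponents G k) (hx : d x = 0) :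
    nbhdExponent G x k ≤ d := by
  intro v
  by_cases hv : G.Adj x v
  · rw [nbhdExponent_apply_of_adj hv]
    have := hd hv
    omega
  · rw [nbhdExponent_apply_of_not_adj hv]
    exact Nat.zero_le _

theorem tsub_nbhdExponent_mem_symbPowExponents {d : V →₀ ℕ}
    (hd : d ∈ symbPowExponents G k) :
    d - nbhdExponent G x k ∈ symbPowExponents (deleteVerts G (insert x (G.neighborSet x))) k := by
  rintro a b ⟨hab, ha, hb⟩
  simp only [Set.mem_insert_iff, SimpleGraph.mem_neighborSet, not_or] at ha hb
  rw [Finsupp.tsub_apply, Finsupp.tsub_apply, nbhdExponent_apply_of_not_adj ha.2,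
    nbhdExponent_apply_of_not_adj hb.2, tsub_zero, tsub_zero]
  exact hd hab

end Neighborhood

end CoverIdeal

theorem statement4_general {V : Type*} [Fintype V] (K : Type*) [Field K]
    (G : SimpleGraph V) [DecidableRel G.Adj] (x : V) (k : ℕ) :
    symbPow K G k + Ideal.span {(X x : MvPolynomial V K)} =
      Ideal.span {(∏ i ∈ G.neighborFinset x, X i : MvPolynomial V K) ^ k} *
          symbPow K (deleteVerts G (insert x (G.neighborSet x))) k +
        Ideal.span {(X x : MvPolynomial V K)} := by
  have hu : (∏ i ∈ G.neighborFinset x, X i : MvPolynomial V K) ^ k =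
      monomial (nbhdExponent G x k) 1 :=
    prod_X_pow_eq_monomial_sum_single _ _
  rw [hu, symbPow_eq_span, symbPow_eq_span, Ideal.span_mul_span', Ideal.add_eq_sup,
    Ideal.add_eq_sup]
  refine le_antisymm (sup_le (Ideal.span_le.2 ?_) le_sup_right)
    (sup_le (le_sup_of_le_left (Ideal.span_mono ?_)) le_sup_right)
  · rintro _ ⟨d, hd, rfl⟩
    by_cases hdx : d x = 0
    · refine Ideal.mem_sup_left (Ideal.subset_span
        ⟨_, rfl, _, ⟨_, tsub_nbhdExponent_mem_symbPowExponents hd, rfl⟩, ?_⟩)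
      dsimp only
      rw [monomial_mul, one_mul, add_tsub_cancel_of_le (nbhdExponent_le hd hdx)]
    · exact Ideal.mem_sup_right (Ideal.mem_span_singleton.2 (X_dvd_monomial.2 (Or.inr hdx)))
  · rintro _ ⟨_, rfl, _, ⟨d, hd, rfl⟩, rfl⟩
    refine ⟨_, nbhdExponent_add_mem_symbPowExponents hd, ?_⟩
    dsimp only
    rw [monomial_mul, one_mul]

/-- Lemma `del`: for a vertex `x` of `G`, with `u = ∏_{x_i ∈ N_G(x)} x_i`
and `J'` the (extension to `S` of the) cover ideal of `G \ N_G[x]`, one has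
`J(G)^{(k)} + (x) = u^k J'^{(k)} + (x)` for every `k ≥ 1`. -/
theorem statement4 {V : Type*} [Fintype V] [DecidableEq V] (K : Type*) [Field K]
    (G : SimpleGraph V) [DecidableRel G.Adj] (x : V) (k : ℕ) (hk : 1 ≤ k) :
    symbPow K G k + Ideal.span {(X x : MvPolynomial V K)} =
      Ideal.span {(∏ i ∈ G.neighborFinset x, X i : MvPolynomial V K) ^ k} *
          symbPow K (deleteVerts G (insert x (G.neighborSet x))) k +
        Ideal.span {(X x : MvPolynomial V K)} :=
  statement4_general K G x k
end

section
/- Let G be a very well-covered graph with 2h vertices. Then the vertices of G can be labeled as V(G) = {x_1, …, x_h, y_1, …, y_h} such that: (i) {x_1, …, x_h} is a minimal vertex cover of G and {y_1, …, y_h} is a maximal independent set of G; (ii) {x_i, y_i} ∈ E(G) for each i = 1, …, h; (iii) if {z_i, x_j} ∈ E(G) and {y_j, x_k} ∈ E(G) for distinct indices i, j, k and z_i ∈ {x_i, y_i}, then {z_i, x_k} ∈ E(G); (iv) if {x_i, y_j} ∈ E(G), then {x_i, x_j} ∉ E(G). -/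
open MvPolynomial

/-!
Very well-coveredness forces a perfect matching. Let `X` be the neighbourhood of a vertex of
minimum degree and `P` the set of vertices whose neighbourhood is exactly `X`; then `P` is
independent and completely joined to `X`. Exchanging `M ∩ X` for `P` in a maximal independent
set `M ∋ x` shows `|P| ≤ |X|`, and deleting `P ∪ X` leaves a graph of the same kind, with
independence number smaller by `|P|`. Induction gives `α ≤ n/2`, and in the case of equality
`|P| = |X|`, so `P` and `X` can be matched to each other. Once a perfect matching `v ↦ m v`
exists, a maximal independent set has as many vertices as there are matching edges, so it
contains exactly one end of each; (iii) and (iv) follow by extending suitable non-adjacent pairs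
to maximal independent sets.
-/

open Set

section

variable {V : Type*} {G : SimpleGraph V}

def IsMaxIndepSetIn (G : SimpleGraph V) (A M : Set V) : Prop :=
  M ⊆ A ∧ IsIndepSet G M ∧ ∀ v ∈ A, v ∉ M → ∃ u ∈ M, G.Adj v u

def IsPerfectMatchingOn (G : SimpleGraph V) (A : Set V) (m : V → V) : Prop :=
  ∀ v ∈ A, m v ∈ A ∧ m (m v) = v ∧ G.Adj v (m v)

theorem isIndepSet_empty : IsIndepSet G ∅ := fun _ ha => ha.elim

theorem isIndepSet_singleton (v : V) : IsIndepSet G {v} := by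
  rintro _ rfl _ rfl h
  exact G.loopless.irrefl _ h

theorem isIndepSet_pair {a b : V} (hab : ¬ G.Adj a b) : IsIndepSet G {a, b} := by
  rintro _ (rfl | rfl) _ (rfl | rfl) h
  exacts [G.loopless.irrefl _ h, hab h, hab h.symm, G.loopless.irrefl _ h]

theorem IsIndepSet.insert {M : Set V} (hM : IsIndepSet G M) {v : V}
    (hv : ∀ u ∈ M, ¬ G.Adj v u) : IsIndepSet G (insert v M) := by
  rintro a (rfl | ha) b (rfl | hb) hab
  · exact G.loopless.irrefl _ hab
  · exact hv b hb hab
  · exact hv a ha hab.symm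
  · exact hM ha hb hab

theorem isMaxIndepSetIn_univ_iff {M : Set V} : IsMaxIndepSetIn G univ M ↔ IsMaxIndepSet G M := by
  constructor
  · rintro ⟨-, hind, hdom⟩
    refine ⟨hind, fun B hB hMB => hMB.antisymm fun v hvB => ?_⟩
    by_contra hvM
    obtain ⟨u, huM, hvu⟩ := hdom v trivial hvM
    exact hB hvB (hMB huM) hvu
  · refine fun ⟨hind, hmax⟩ => ⟨subset_univ _, hind, fun v _ hvM => ?_⟩
    by_contra! h
    exact hvM ((hmax _ (hind.insert h) (subset_insert _ _)).symm ▸ mem_insert v M)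

theorem IsMaxIndepSet.exists_adj {M : Set V} (hM : IsMaxIndepSet G M) {v : V} (hv : v ∉ M) :
    ∃ u ∈ M, G.Adj v u :=
  (isMaxIndepSetIn_univ_iff.2 hM).2.2 v trivial hv

theorem IsMaxIndepSet.isMinVertexCover_compl {M : Set V} (hM : IsMaxIndepSet G M) :
    IsMinVertexCover G Mᶜ := by
  refine ⟨fun _ _ hab => ?_, fun D hD hDcov => ?_⟩
  · by_contra! h
    exact hM.1 (not_not.1 h.1) (not_not.1 h.2) hab
  · obtain ⟨c, hcM, hcD⟩ := exists_of_ssubset hD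
    obtain ⟨u, huM, hcu⟩ := hM.exists_adj hcM
    exact (hDcov hcu).elim hcD fun huD => hD.1 huD huM

section Finite

variable [Finite V]

theorem exists_isMaxIndepSetIn_superset (G : SimpleGraph V) {A I : Set V} (hIA : I ⊆ A)
    (hI : IsIndepSet G I) : ∃ M, IsMaxIndepSetIn G A M ∧ I ⊆ M := by
  obtain ⟨M, hIM, hmax⟩ := Set.Finite.exists_le_maximal
    (toFinite {M : Set V | M ⊆ A ∧ IsIndepSet G M ∧ I ⊆ M}) (a := I) ⟨hIA, hI, subset_rfl⟩
  obtain ⟨hMA, hM, -⟩ := hmax.prop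
  refine ⟨M, ⟨hMA, hM, fun v hvA hvM => ?_⟩, hIM⟩
  by_contra! h
  exact hvM (hmax.2 ⟨insert_subset hvA hMA, hM.insert h, hIM.trans (subset_insert _ _)⟩
    (subset_insert _ _) (mem_insert v M))

theorem exists_isMaxIndepSet_of_not_adj {a b : V} (hab : ¬ G.Adj a b) :
    ∃ M, IsMaxIndepSet G M ∧ a ∈ M ∧ b ∈ M := by
  obtain ⟨M, hM, hIM⟩ := exists_isMaxIndepSetIn_superset G (subset_univ _) (isIndepSet_pair hab)
  exact ⟨M, isMaxIndepSetIn_univ_iff.1 hM, hIM (mem_insert _ _), hIM (by simp)⟩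

theorem exists_isMaxIndepSet (G : SimpleGraph V) : ∃ M, IsMaxIndepSet G M :=
  let ⟨M, hM, _⟩ := exists_isMaxIndepSetIn_superset G (subset_univ ∅) isIndepSet_empty
  ⟨M, isMaxIndepSetIn_univ_iff.1 hM⟩

theorem ncard_le_of_isMaxIndepSetIn {A I : Set V} {s : ℕ}
    (hs : ∀ M, IsMaxIndepSetIn G A M → M.ncard = s) (hIA : I ⊆ A) (hI : IsIndepSet G I) :
    I.ncard ≤ s := by
  obtain ⟨M, hM, hIM⟩ := exists_isMaxIndepSetIn_superset G hIA hI
  exact hs M hM ▸ ncard_le_ncard hIM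

end Finite

section Twins

variable {A P X : Set V} (hPX : ∀ p ∈ P, G.neighborSet p ∩ A = X)
include hPX

theorem adj_of_neighborSet_inter_eq {p x : V} (hp : p ∈ P) (hx : x ∈ X) : G.Adj p x :=
  ((hPX p hp).symm ▸ hx : x ∈ G.neighborSet p ∩ A).1

theorem mem_of_neighborSet_inter_eq {p a : V} (hp : p ∈ P) (ha : a ∈ A) (hpa : G.Adj p a) :
    a ∈ X :=
  hPX p hp ▸ ⟨hpa, ha⟩

theorem disjoint_of_neighborSet_inter_eq : Disjoint P X :=
  disjoint_left.2 fun p hp hpX => G.loopless.irrefl p (adj_of_neighborSet_inter_eq hPX hp hpX)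

theorem isIndepSet_of_neighborSet_inter_eq (hPA : P ⊆ A) : IsIndepSet G P :=
  fun _ hp _ hp' hpp' => disjoint_left.1 (disjoint_of_neighborSet_inter_eq hPX) hp'
    (mem_of_neighborSet_inter_eq hPX hp (hPA hp') hpp')

theorem ncard_le_of_neighborSet_inter_eq [Finite V] {s : ℕ}
    (hs : ∀ M, IsMaxIndepSetIn G A M → M.ncard = s) (hPA : P ⊆ A) (hXA : X ⊆ A)
    (hX : X.Nonempty) : P.ncard ≤ X.ncard := by
  obtain ⟨x, hx⟩ := hX
  obtain ⟨M, hM, hxM⟩ :=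
    exists_isMaxIndepSetIn_superset G (singleton_subset_iff.2 (hXA hx)) (isIndepSet_singleton x)
  have hMP : Disjoint (M \ X) P := disjoint_left.2 fun p hpM hp =>
    hM.2.1 hpM.1 (hxM rfl) (adj_of_neighborSet_inter_eq hPX hp hx)
  have hexch : IsIndepSet G ((M \ X) ∪ P) := by
    rintro a (ha | ha) b (hb | hb) hab
    · exact hM.2.1 ha.1 hb.1 hab
    · exact ha.2 (mem_of_neighborSet_inter_eq hPX hb (hM.1 ha.1) hab.symm)
    · exact hb.2 (mem_of_neighborSet_inter_eq hPX ha (hM.1 hb.1) hab)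
    · exact isIndepSet_of_neighborSet_inter_eq hPX hPA ha hb hab
  have hle := ncard_le_of_isMaxIndepSetIn hs (union_subset (sdiff_subset.trans hM.1) hPA) hexch
  rw [ncard_union_eq hMP] at hle
  have := ncard_le_ncard_sdiff_add_ncard M X
  have := hs M hM
  omega

theorem isMaxIndepSetIn_union_of_neighborSet_inter_eq (hPA : P ⊆ A) (hP : P.Nonempty)
    {M : Set V} (hM : IsMaxIndepSetIn G (A \ (P ∪ X)) M) : IsMaxIndepSetIn G A (P ∪ M) := by
  obtain ⟨hMA, hMind, hMdom⟩ := hM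
  refine ⟨union_subset hPA (hMA.trans sdiff_subset), ?_, fun v hvA hv => ?_⟩
  · rintro a (ha | ha) b (hb | hb) hab
    · exact isIndepSet_of_neighborSet_inter_eq hPX hPA ha hb hab
    · exact (hMA hb).2 (Or.inr (mem_of_neighborSet_inter_eq hPX ha (hMA hb).1 hab))
    · exact (hMA ha).2 (Or.inr (mem_of_neighborSet_inter_eq hPX hb (hMA ha).1 hab.symm))
    · exact hMind ha hb hab
  · by_cases hvX : v ∈ X
    · obtain ⟨p, hp⟩ := hP
      exact ⟨p, Or.inl hp, (adj_of_neighborSet_inter_eq hPX hp hvX).symm⟩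
    · obtain ⟨u, huM, hvu⟩ :=
        hMdom v ⟨hvA, fun h => h.elim (fun hvP => hv (Or.inl hvP)) hvX⟩ fun h => hv (Or.inr h)
      exact ⟨u, Or.inr huM, hvu⟩

end Twins

theorem IsPerfectMatchingOn.piecewise {A B : Set V} {m n : V → V} [DecidablePred (· ∈ A)]
    (hm : IsPerfectMatchingOn G A m) (hn : IsPerfectMatchingOn G B n) (hAB : Disjoint A B) :
    IsPerfectMatchingOn G (A ∪ B) (A.piecewise m n) := by
  rintro v (hv | hv)
  · obtain ⟨hmv, hmmv, hadj⟩ := hm v hv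
    rw [piecewise_eq_of_mem _ _ _ hv, piecewise_eq_of_mem _ _ _ hmv]
    exact ⟨Or.inl hmv, hmmv, hadj⟩
  · obtain ⟨hnv, hnnv, hadj⟩ := hn v hv
    have hvA : v ∉ A := disjoint_right.1 hAB hv
    have hnvA : n v ∉ A := disjoint_right.1 hAB hnv
    rw [piecewise_eq_of_notMem _ _ _ hvA, piecewise_eq_of_notMem _ _ _ hnvA]
    exact ⟨Or.inr hnv, hnnv, hadj⟩

theorem exists_isPerfectMatchingOn_union [Finite V] {P X : Set V} (hPX : Disjoint P X)
    (hcard : P.ncard = X.ncard) (hadj : ∀ p ∈ P, ∀ x ∈ X, G.Adj p x) :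
    ∃ m, IsPerfectMatchingOn G (P ∪ X) m := by
  classical
  obtain ⟨e⟩ : Nonempty (P ≃ X) := by
    rw [← Finite.card_eq, Nat.card_coe_set_eq, Nat.card_coe_set_eq, hcard]
  have heP (v : P) : (e v : V) ∉ P := disjoint_right.1 hPX (e v).2
  refine ⟨fun v => if hv : v ∈ P then e ⟨v, hv⟩ else if hv : v ∈ X then e.symm ⟨v, hv⟩ else v,
    ?_⟩
  rintro v (hv | hv)
  · simpa [hv, heP] using hadj v hv _ (e ⟨v, hv⟩).2
  · have hvP : v ∉ P := disjoint_right.1 hPX hv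
    simpa [hv, hvP] using (hadj _ (e.symm ⟨v, hv⟩).2 v hv).symm

theorem two_mul_le_ncard_and_exists_isPerfectMatchingOn [Finite V] {A : Set V} {s : ℕ}
    (hA : ∀ v ∈ A, ∃ u ∈ A, G.Adj v u) (hs : ∀ M, IsMaxIndepSetIn G A M → M.ncard = s) :
    2 * s ≤ A.ncard ∧ (A.ncard = 2 * s → ∃ m, IsPerfectMatchingOn G A m) := by
  classical
  induction hn : A.ncard using Nat.strong_induction_on generalizing A s with
  | _ n ih =>
  rcases A.eq_empty_or_nonempty with rfl | hAne
  · have hs0 : s = 0 := by simpa using (hs ∅ ⟨subset_rfl, isIndepSet_empty, by simp⟩).symm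
    exact ⟨by omega, fun _ => ⟨id, by simp [IsPerfectMatchingOn]⟩⟩
  obtain ⟨v₀, hv₀A, hv₀min⟩ :=
    exists_min_image A (fun v => (G.neighborSet v ∩ A).ncard) A.toFinite hAne
  set X := G.neighborSet v₀ ∩ A
  set P := {z ∈ A | G.neighborSet z ∩ A = X}
  have hPX : ∀ p ∈ P, G.neighborSet p ∩ A = X := fun p hp => hp.2
  have hPA : P ⊆ A := sep_subset _ _
  have hXA : X ⊆ A := inter_subset_right
  have hv₀P : v₀ ∈ P := ⟨hv₀A, rfl⟩
  have hX : X.Nonempty := by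
    obtain ⟨u, huA, hu⟩ := hA v₀ hv₀A
    exact ⟨u, hu, huA⟩
  set B := A \ (P ∪ X)
  -- a vertex of `B` isolated in `B` would have its neighbourhood inside `X`, hence equal to it
  have hB : ∀ v ∈ B, ∃ u ∈ B, G.Adj v u := by
    intro v hv
    by_contra! hiso
    have hsub : G.neighborSet v ∩ A ⊆ X := fun u ⟨hvu, huA⟩ => by
      by_contra huX
      by_cases huP : u ∈ P
      · exact hv.2 (Or.inr (mem_of_neighborSet_inter_eq hPX huP hv.1 hvu.symm))
      · exact hiso u ⟨huA, fun h => h.elim huP huX⟩ hvu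
    exact hv.2 (Or.inl ⟨hv.1, eq_of_subset_of_ncard_le hsub (hv₀min v hv.1)⟩)
  have hPB : Disjoint P B := disjoint_left.2 fun p hp hpB => hpB.2 (Or.inl hp)
  have hPs : P.ncard ≤ s :=
    ncard_le_of_isMaxIndepSetIn hs hPA (isIndepSet_of_neighborSet_inter_eq hPX hPA)
  have hsB : ∀ M, IsMaxIndepSetIn G B M → M.ncard = s - P.ncard := fun M hM => by
    have := hs _ (isMaxIndepSetIn_union_of_neighborSet_inter_eq hPX hPA ⟨v₀, hv₀P⟩ hM)
    rw [ncard_union_eq (hPB.mono_right hM.1)] at this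
    omega
  have hPXA : P ∪ X ⊆ A := union_subset hPA hXA
  have hcardA : B.ncard + (P.ncard + X.ncard) = n := by
    rw [← ncard_union_eq (disjoint_of_neighborSet_inter_eq hPX),
      ncard_sdiff_add_ncard_of_subset hPXA, hn]
  have hPle := ncard_le_of_neighborSet_inter_eq hPX hs hPA hXA hX
  have hX1 : 1 ≤ X.ncard := (ncard_pos X.toFinite).2 hX
  obtain ⟨hleB, hmatchB⟩ := ih B.ncard (by omega) hB hsB rfl
  refine ⟨by omega, fun hAs => ?_⟩
  obtain ⟨mB, hmB⟩ := hmatchB (by omega)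
  obtain ⟨mPX, hmPX⟩ := exists_isPerfectMatchingOn_union (disjoint_of_neighborSet_inter_eq hPX)
    (by omega) fun p hp x hx => adj_of_neighborSet_inter_eq hPX hp hx
  rw [← union_sdiff_cancel hPXA]
  exact ⟨_, hmPX.piecewise hmB disjoint_sdiff_right⟩

theorem VeryWellCovered.exists_involutive_adj [Fintype V] (hG : VeryWellCovered G) :
    ∃ m : V → V, Function.Involutive m ∧ ∀ v, G.Adj v (m v) := by
  obtain ⟨hiso, -, hsize⟩ := hG
  obtain ⟨Y, hY⟩ := exists_isMaxIndepSet G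
  have hs : ∀ M, IsMaxIndepSetIn G univ M → M.ncard = Y.ncard := fun M hM => by
    have h1 := hsize M (isMaxIndepSetIn_univ_iff.1 hM)
    have h2 := hsize Y hY
    omega
  have huniv : (univ : Set V).ncard = 2 * Y.ncard := by
    rw [ncard_univ, Nat.card_eq_fintype_card, hsize Y hY]
  obtain ⟨m, hm⟩ := (two_mul_le_ncard_and_exists_isPerfectMatchingOn
    (fun v _ => (hiso v).imp fun u hu => ⟨trivial, hu⟩) hs).2 huniv
  exact ⟨m, fun v => (hm v trivial).2.1, fun v => (hm v trivial).2.2⟩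

theorem IsIndepSet.disjoint_image {m : V → V} (hadj : ∀ v, G.Adj v (m v)) {M : Set V}
    (hM : IsIndepSet G M) : Disjoint M (m '' M) :=
  disjoint_right.2 fun _ ⟨u, huM, hu⟩ hvM => hM huM (hu ▸ hvM) (hadj u)

section Involution

variable {m : V → V} (hm : Function.Involutive m) (hadj : ∀ v, G.Adj v (m v))
include hm hadj

theorem mem_or_apply_mem [Fintype V] {M : Set V} (hM : IsIndepSet G M)
    (hcard : 2 * M.ncard = Fintype.card V) (v : V) : v ∈ M ∨ m v ∈ M := by
  have hunion : M ∪ m '' M = univ := by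
    refine eq_of_subset_of_ncard_le (subset_univ _) ?_
    rw [ncard_union_eq (hM.disjoint_image hadj), ncard_image_of_injective _ hm.injective,
      ncard_univ, Nat.card_eq_fintype_card]
    omega
  rcases (hunion ▸ mem_univ v : v ∈ M ∪ m '' M) with hv | ⟨u, huM, rfl⟩
  · exact Or.inl hv
  · exact Or.inr ((hm u).symm ▸ huM)

theorem exists_sumEquiv_of_isIndepSet [Fintype V] {Y : Set V} (hY : IsIndepSet G Y) {h : ℕ}
    (hYcard : Y.ncard = h) (hcard : Fintype.card V = 2 * h) :
    ∃ e : Fin h ⊕ Fin h ≃ V,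
      (range fun i => e (Sum.inr i)) = Y ∧ ∀ i, e (Sum.inl i) = m (e (Sum.inr i)) := by
  obtain ⟨f⟩ : Nonempty (Fin h ≃ Y) := by
    rw [← Finite.card_eq, Nat.card_coe_set_eq, Nat.card_eq_fintype_card, Fintype.card_fin, hYcard]
  have hmY (i j : Fin h) : m (f i) ≠ f j := fun hij =>
    disjoint_right.1 (hY.disjoint_image hadj) ⟨f i, (f i).2, hij⟩ (f j).2
  let F : Fin h ⊕ Fin h → V := Sum.elim (fun i => m (f i)) (fun i => f i)
  have hF : Function.Bijective F := by
    refine (Fintype.bijective_iff_injective_and_card F).2 ⟨?_, by simp [hcard]; ring⟩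
    rintro (i | i) (j | j) hij
    · exact congrArg Sum.inl (f.injective (Subtype.ext (hm.injective hij)))
    · exact (hmY i j hij).elim
    · exact (hmY j i hij.symm).elim
    · exact congrArg Sum.inr (f.injective (Subtype.ext hij))
  refine ⟨Equiv.ofBijective F hF, ?_, fun i => by simp [F]⟩
  change range (Subtype.val ∘ f) = Y
  rw [EquivLike.range_comp, Subtype.range_coe]

end Involution

section Pairs

variable [Finite V] {m : V → V}
  (hpair : ∀ M, IsMaxIndepSet G M → ∀ v, v ∈ M ∨ m v ∈ M)
include hpair

theorem not_adj_and_adj_apply (w v : V) : ¬ (G.Adj w v ∧ G.Adj w (m v)) := fun ⟨h1, h2⟩ => by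
  obtain ⟨M, hM, hwM, -⟩ := exists_isMaxIndepSet_of_not_adj (G.loopless.irrefl w)
  rcases hpair M hM v with hv | hv
  · exact hM.1 hwM hv h1
  · exact hM.1 hwM hv h2

theorem adj_of_adj_of_adj_apply {z x y : V} (hzx : G.Adj z x) (hxy : G.Adj (m x) y) :
    G.Adj z y := by
  by_contra hzy
  by_cases hzmy : G.Adj z (m y)
  · obtain ⟨M, hM, hzM, hmxM⟩ :=
      exists_isMaxIndepSet_of_not_adj fun h => not_adj_and_adj_apply hpair z x ⟨hzx, h⟩
    rcases hpair M hM y with hy | hy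
    · exact hM.1 hmxM hy hxy
    · exact hM.1 hzM hy hzmy
  · obtain ⟨M, hM, hzM, hyM⟩ := exists_isMaxIndepSet_of_not_adj hzy
    rcases hpair M hM x with hx | hx
    · exact hM.1 hzM hx hzx
    · exact hM.1 hx hyM hxy

end Pairs

end

/-- The labelling is the equivalence `e`, with `x_i = e (inl i)` and `y_i = e (inr i)`. -/
theorem statement5 {V : Type*} [Fintype V] (G : SimpleGraph V) (h : ℕ)
    (hcard : Fintype.card V = 2 * h) (hG : VeryWellCovered G) :
    ∃ e : Fin h ⊕ Fin h ≃ V,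
      -- (i)
      IsMinVertexCover G (Set.range fun i => e (Sum.inl i)) ∧
      IsMaxIndepSet G (Set.range fun i => e (Sum.inr i)) ∧
      -- (ii)
      (∀ i : Fin h, G.Adj (e (Sum.inl i)) (e (Sum.inr i))) ∧
      -- (iii)
      (∀ i j k : Fin h, i ≠ j → j ≠ k → i ≠ k →
        ∀ z ∈ ({e (Sum.inl i), e (Sum.inr i)} : Set V),
          G.Adj z (e (Sum.inl j)) → G.Adj (e (Sum.inr j)) (e (Sum.inl k)) →
            G.Adj z (e (Sum.inl k))) ∧
      -- (iv)
      (∀ i j : Fin h, G.Adj (e (Sum.inl i)) (e (Sum.inr j)) →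
        ¬ G.Adj (e (Sum.inl i)) (e (Sum.inl j))) := by
  obtain ⟨m, hm, hadj⟩ := hG.exists_involutive_adj
  obtain ⟨Y, hY⟩ := exists_isMaxIndepSet G
  obtain ⟨e, hrange, hx⟩ :=
    exists_sumEquiv_of_isIndepSet hm hadj hY.1 (by have := hG.2.2 Y hY; omega) hcard
  have hy (i : Fin h) : e (Sum.inr i) = m (e (Sum.inl i)) := by rw [hx, hm]
  have hpair := fun M (hM : IsMaxIndepSet G M) => mem_or_apply_mem hm hadj hM.1 (hG.2.2 M hM)
  have hcompl : (range fun i => e (Sum.inl i)) = (range fun i => e (Sum.inr i))ᶜ := by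
    rw [← Function.comp_def, ← Function.comp_def, range_comp, range_comp, ← compl_range_inr,
      image_compl_eq e.bijective]
  refine ⟨e, ?_, hrange ▸ hY, fun i => hy i ▸ hadj _, ?_, ?_⟩
  · exact hcompl ▸ hrange ▸ hY.isMinVertexCover_compl
  · intro i j k _ _ _ z _ hzj hjk
    exact adj_of_adj_of_adj_apply hpair hzj (hy j ▸ hjk)
  · intro i j hij hij'
    exact not_adj_and_adj_apply hpair _ _ ⟨hij', hy j ▸ hij⟩
end

section
/- Let G be a finite simple graph without isolated vertices and let k ≥ 1 be an integer. If the monomial u is a minimal monomial generator of J(G), then u^k is a minimal monomial generator of J(G)^{(k)}. -/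
open MvPolynomial

/-!
A monomial `x^m` lies in `(x_a, x_b)^k` exactly when `m a + m b ≥ k`. Hence `x^m` is a minimal
generator of `J(G)^{(k)}` iff every edge has `m`-weight at least `k` and every vertex of positive
weight lies on an edge of weight exactly `k`. Multiplying `m` by `k` turns edges of weight `1`
into edges of weight `k` and does not change which vertices have positive weight.
-/

namespace MvPolynomial

variable {σ R : Type*} [CommSemiring R]

theorem span_X_pair_pow_le (a b : σ) (k : ℕ) :
    (Ideal.span {X a, X b} : Ideal (MvPolynomial σ R)) ^ k ≤
      Ideal.span ((fun d => monomial d (1 : R)) '' {d | k ≤ d a + d b}) := by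
  classical
  induction k with
  | zero =>
    rw [pow_zero, Ideal.one_eq_top, top_le_iff, Ideal.eq_top_iff_one, ← C_1, ← monomial_zero']
    exact Ideal.subset_span ⟨0, Nat.zero_le _, rfl⟩
  | succ k ih =>
    rw [pow_succ]
    refine (Ideal.mul_mono_left ih).trans ?_
    rw [Ideal.span_mul_span']
    refine Ideal.span_mono ?_
    rintro _ ⟨_, ⟨d, hd, rfl⟩, _, rfl | rfl, rfl⟩ <;>
      [refine ⟨d + Finsupp.single a 1, ?_, ?_⟩; refine ⟨d + Finsupp.single b 1, ?_, ?_⟩] <;>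
      simp_all [X, monomial_mul, Finsupp.single_apply] <;> split_ifs <;> omega

theorem monomial_one_mem_span_X_pair_pow_iff [Nontrivial R] {a b : σ} (hab : a ≠ b) {k : ℕ}
    {m : σ →₀ ℕ} :
    monomial m (1 : R) ∈ Ideal.span {X a, X b} ^ k ↔ k ≤ m a + m b := by
  classical
  refine ⟨fun h => ?_, fun h => ?_⟩
  · obtain ⟨d, hd, hdm⟩ :=
      mem_ideal_span_monomial_image.1 (span_X_pair_pow_le a b k h) m (by simp)
    exact hd.trans (add_le_add (hdm a) (hdm b))
  · have hdvd : X a ^ m a * X b ^ m b ∣ monomial m (1 : R) := by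
      rw [X_pow_eq_monomial, X_pow_eq_monomial, monomial_mul, one_mul, monomial_dvd_monomial]
      refine ⟨Or.inr fun v => ?_, dvd_rfl⟩
      simp only [Finsupp.add_apply, Finsupp.single_apply]
      split_ifs <;> subst_vars <;> simp_all
    refine Ideal.mem_of_dvd _ hdvd (Ideal.pow_le_pow_right h ?_)
    rw [pow_add]
    exact Ideal.mul_mem_mul (Ideal.pow_mem_pow (Ideal.subset_span (by simp)) _)
      (Ideal.pow_mem_pow (Ideal.subset_span (by simp)) _)

end MvPolynomial

section CoverIdeal

variable {V K : Type*} [Field K] {G : SimpleGraph V}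

theorem coverIdeal_eq_symbPow_one : coverIdeal K G = symbPow K G 1 := by
  simp only [coverIdeal, symbPow, pow_one]

theorem monomial_one_mem_symbPow_iff {k : ℕ} {m : V →₀ ℕ} :
    monomial m (1 : K) ∈ symbPow K G k ↔ ∀ a b, G.Adj a b → k ≤ m a + m b := by
  simp only [symbPow, Ideal.mem_iInf, Prod.forall]
  exact forall₂_congr fun a b => forall_congr' fun hab =>
    monomial_one_mem_span_X_pair_pow_iff hab.ne

theorem isMinGen_symbPow_iff_s6 {k : ℕ} {m : V →₀ ℕ} :
    IsMinGen (symbPow K G k) m ↔ (∀ a b, G.Adj a b → k ≤ m a + m b) ∧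
      ∀ i, m i ≠ 0 → ∃ a b, G.Adj a b ∧ (i = a ∨ i = b) ∧ m a + m b = k := by
  simp only [IsMinGen, monomial_one_mem_symbPow_iff, not_forall, not_le, exists_prop]
  refine and_congr_right fun hcover => forall₂_congr fun i hi => exists₂_congr fun a b =>
    and_congr_right fun hab => ?_
  have hab' := hcover a b hab
  classical
  simp only [Finsupp.tsub_apply, Finsupp.single_apply]
  split_ifs <;> subst_vars
  · exact (hab.ne rfl).elim
  all_goals simp only [or_true, true_and, or_false, false_and, iff_false,
    tsub_zero, not_lt, *]
  all_goals omega

end CoverIdeal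

theorem statement6_general {V : Type*} (K : Type*) [Field K] (G : SimpleGraph V)
    (k : ℕ) (m : V →₀ ℕ)
    (hm : IsMinGen (coverIdeal K G) m) :
    IsMinGen (symbPow K G k) (k • m) := by
  rw [coverIdeal_eq_symbPow_one, isMinGen_symbPow_iff_s6] at hm
  obtain ⟨hcover, htight⟩ := hm
  refine isMinGen_symbPow_iff_s6.2 ⟨fun a b hab => ?_, fun i hi => ?_⟩
  · simpa [mul_add] using Nat.mul_le_mul_left k (hcover a b hab)
  · obtain ⟨a, b, hab, hiab, hw⟩ := htight i (right_ne_zero_of_mul hi)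
    exact ⟨a, b, hab, hiab, by simp [← mul_add, hw]⟩

/-- from the proof of Lemma `singdeg`: if `G` has no isolated vertices,
`k ≥ 1`, and the monomial with exponent vector `m` is a minimal monomial generator of
`J(G)`, then its `k`-th power (exponent vector `k • m`) is a minimal monomial generator of
`J(G)^{(k)}`. -/
theorem statement6 {V : Type*} [Fintype V] (K : Type*) [Field K] (G : SimpleGraph V)
    (hiso : HasNoIsolatedVertex G) (k : ℕ) (hk : 1 ≤ k) (m : V →₀ ℕ)
    (hm : IsMinGen (coverIdeal K G) m) :
    IsMinGen (symbPow K G k) (k • m) :=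
  statement6_general K G k m hm
end

section
/- Let G be a claw-free finite simple graph with n vertices and no isolated vertices. Then G admits a minimal vertex cover of cardinality at least n/2; equivalently, G has a maximal independent set of cardinality at most n/2. -/
open MvPolynomial

/-!
Given `v ∈ s`, the set `P` of vertices of `s` stranded by `v` (left isolated in `s` once the
neighbourhood `N(v)` is deleted; `v` is one of them) is independent, and deleting `N(v) ∪ P` from `s`
leaves no isolated vertex. So by induction on `s`, `P` together with an independent dominating set of
`s \ (N(v) ∪ P)` is an independent dominating set of `s`, with at most `|s| / 2` elements as soon as
`|P| ≤ |N(v)|`. In a claw-free graph every vertex has at most two neighbours in an independent set,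
so double counting gives `|P| ≤ |N(v)|` for every `v` when no vertex of `s` is a leaf; otherwise a
leaf, or the common neighbour of two leaves, will do. The complement of the resulting maximal
independent set is a minimal vertex cover.
-/

open Finset

section Domination

variable {V : Type*} {G : SimpleGraph V} {A : Set V}

theorem IsIndepSet.isMaxIndepSet_of_dominating (hA : IsIndepSet G A)
    (hdom : ∀ b ∉ A, ∃ a ∈ A, G.Adj a b) : IsMaxIndepSet G A := by
  refine ⟨hA, fun B hB hAB => hAB.antisymm fun b hbB => ?_⟩
  by_contra hbA
  obtain ⟨a, haA, hab⟩ := hdom b hbA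
  exact hB (hAB haA) hbB hab

theorem IsIndepSet.isMinVertexCover_compl_of_dominating (hA : IsIndepSet G A)
    (hdom : ∀ b ∉ A, ∃ a ∈ A, G.Adj a b) : IsMinVertexCover G Aᶜ := by
  refine ⟨fun a b hab => ?_, fun D hD hDcov => ?_⟩
  · by_contra! h
    exact hA (not_not.1 h.1) (not_not.1 h.2) hab
  · obtain ⟨c, hcA, hcD⟩ := Set.exists_of_ssubset hD
    obtain ⟨a, haA, hac⟩ := hdom c hcA
    exact (hDcov hac).elim (fun haD => hD.1 haD haA) hcD

end Domination

def SimpleGraph.nbrsIn {V : Type*} (G : SimpleGraph V) [DecidableRel G.Adj] (s : Finset V)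
    (v : V) : Finset V :=
  {w ∈ s | G.Adj v w}

def SimpleGraph.strandedBy {V : Type*} [DecidableEq V] (G : SimpleGraph V) [DecidableRel G.Adj]
    (s : Finset V) (v : V) : Finset V :=
  {x ∈ s | ¬G.Adj v x ∧ G.nbrsIn s x ⊆ G.nbrsIn s v}

section Stranded

variable {V : Type*} {G : SimpleGraph V} [DecidableRel G.Adj] {s : Finset V} {v : V}

theorem mem_nbrsIn {w : V} : w ∈ G.nbrsIn s v ↔ w ∈ s ∧ G.Adj v w := mem_filter

variable [DecidableEq V]

theorem mem_strandedBy {x : V} :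
    x ∈ G.strandedBy s v ↔ x ∈ s ∧ ¬G.Adj v x ∧ G.nbrsIn s x ⊆ G.nbrsIn s v :=
  mem_filter

theorem self_mem_strandedBy (hv : v ∈ s) : v ∈ G.strandedBy s v :=
  mem_strandedBy.2 ⟨hv, G.loopless.irrefl v, subset_refl _⟩

theorem mem_nbrsIn_of_mem_strandedBy_of_adj {x y : V} (hx : x ∈ G.strandedBy s v) (hy : y ∈ s)
    (hxy : G.Adj x y) : y ∈ G.nbrsIn s v :=
  (mem_strandedBy.1 hx).2.2 (mem_nbrsIn.2 ⟨hy, hxy⟩)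

theorem isIndepSet_strandedBy (s : Finset V) (v : V) : IsIndepSet G ↑(G.strandedBy s v) :=
  fun _ ha _ hb hab => (mem_strandedBy.1 hb).2.1 (mem_nbrsIn.1
    (mem_nbrsIn_of_mem_strandedBy_of_adj ha (mem_strandedBy.1 hb).1 hab)).2

theorem disjoint_nbrsIn_strandedBy : Disjoint (G.nbrsIn s v) (G.strandedBy s v) :=
  disjoint_left.2 fun _ hN hP => (mem_strandedBy.1 hP).2.1 (mem_nbrsIn.1 hN).2

theorem nbrsIn_sdiff_nonempty (v : V) :
    ∀ x ∈ s \ (G.nbrsIn s v ∪ G.strandedBy s v),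
      (G.nbrsIn (s \ (G.nbrsIn s v ∪ G.strandedBy s v)) x).Nonempty := by
  intro x hx
  simp only [mem_sdiff, mem_union, not_or] at hx
  obtain ⟨hxs, hxN, hxP⟩ := hx
  have hvx : ¬G.Adj v x := fun h => hxN (mem_nbrsIn.2 ⟨hxs, h⟩)
  obtain ⟨y, hyx, hyN⟩ := not_subset.1 fun h => hxP (mem_strandedBy.2 ⟨hxs, hvx, h⟩)
  obtain ⟨hys, hxy⟩ := mem_nbrsIn.1 hyx
  have hyP : y ∉ G.strandedBy s v := fun h =>
    hxN (mem_nbrsIn_of_mem_strandedBy_of_adj h hxs hxy.symm)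
  exact ⟨y, mem_nbrsIn.2 ⟨mem_sdiff.2 ⟨hys, by simp [hyN, hyP]⟩, hxy⟩⟩

end Stranded

namespace ClawFree

variable {V : Type*} {G : SimpleGraph V} [DecidableRel G.Adj]

theorem card_filter_adj_le_two (hG : ClawFree G) {P : Finset V} (hP : IsIndepSet G ↑P) (z : V) :
    #{x ∈ P | G.Adj x z} ≤ 2 := by
  by_contra! h
  obtain ⟨a, ha, b, hb, c, hc, hab, hac, hbc⟩ := two_lt_card.1 h
  rw [mem_filter] at ha hb hc
  exact hG ⟨z, a, b, c, ha.2.symm, hb.2.symm, hc.2.symm, hP ha.1 hb.1, hP ha.1 hc.1,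
    hP hb.1 hc.1, hab, hac, hbc⟩

theorem card_le_of_two_le_card_filter_adj (hG : ClawFree G) {P N : Finset V}
    (hP : IsIndepSet G ↑P) (h2 : ∀ x ∈ P, 2 ≤ #{y ∈ N | G.Adj x y}) : #P ≤ #N := by
  have := card_mul_le_card_mul (fun x y => G.Adj x y) h2
    (fun z _ => hG.card_filter_adj_le_two hP z)
  omega

variable [DecidableEq V] {s : Finset V}

theorem strandedBy_subset_of_two_leaves (hG : ClawFree G)
    (hs : ∀ v ∈ s, (G.nbrsIn s v).Nonempty) {x y z : V} (hys : y ∈ s) (hxy : x ≠ y)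
    (hxz : G.nbrsIn s x = {z}) (hyz : G.nbrsIn s y = {z}) : G.strandedBy s z ⊆ {z} := by
  have hleaf {a u : V} (ha : G.nbrsIn s a = {z}) (hu : u ∈ s) : G.Adj a u ↔ u = z := by
    rw [← mem_singleton, ← ha, mem_nbrsIn, and_iff_right hu]
  have hzx : G.Adj z x := (mem_nbrsIn.1 (hxz ▸ mem_singleton_self z : z ∈ G.nbrsIn s x)).2.symm
  have hzy : G.Adj z y := (mem_nbrsIn.1 (hyz ▸ mem_singleton_self z : z ∈ G.nbrsIn s y)).2.symm
  intro w hw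
  rw [mem_singleton]
  by_contra hwz
  obtain ⟨hws, -, hwN⟩ := mem_strandedBy.1 hw
  obtain ⟨u, hu⟩ := hs w hws
  obtain ⟨hus, hwu⟩ := mem_nbrsIn.1 hu
  have hzu : G.Adj z u := (mem_nbrsIn.1 (hwN hu)).2
  have hxu : x ≠ u := by rintro rfl; exact hwz ((hleaf hxz hws).1 hwu.symm)
  have hyu : y ≠ u := by rintro rfl; exact hwz ((hleaf hyz hws).1 hwu.symm)
  exact hG ⟨z, x, y, u, hzx, hzy, hzu, fun h => hzy.ne' ((hleaf hxz hys).1 h),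
    fun h => hzu.ne' ((hleaf hxz hus).1 h), fun h => hzu.ne' ((hleaf hyz hus).1 h), hxy, hxu, hyu⟩

theorem exists_card_strandedBy_le_of_leaf (hG : ClawFree G)
    (hs : ∀ v ∈ s, (G.nbrsIn s v).Nonempty) {x z : V} (hx : x ∈ s) (hxz : G.nbrsIn s x = {z}) :
    ∃ v ∈ s, #(G.strandedBy s v) ≤ #(G.nbrsIn s v) := by
  by_cases hxP : G.strandedBy s x ⊆ {x}
  · exact ⟨x, hx, by simpa [hxz] using card_le_card hxP⟩
  obtain ⟨y, hyP, hyx⟩ := not_subset.1 hxP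
  obtain ⟨hys, -, hyN⟩ := mem_strandedBy.1 hyP
  have hyz : G.nbrsIn s y = {z} :=
    (subset_singleton_iff.1 (hxz ▸ hyN)).resolve_left (hs y hys).ne_empty
  have hzs : z ∈ s := (mem_nbrsIn.1 (hxz ▸ mem_singleton_self z : z ∈ G.nbrsIn s x)).1
  have hzP := hG.strandedBy_subset_of_two_leaves hs hys (Ne.symm (mem_singleton.not.1 hyx)) hxz hyz
  refine ⟨z, hzs, (card_le_card hzP).trans ?_⟩
  rw [card_singleton]
  exact card_pos.2 (hs z hzs)

theorem exists_card_strandedBy_le (hG : ClawFree G) (hne : s.Nonempty)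
    (hs : ∀ v ∈ s, (G.nbrsIn s v).Nonempty) :
    ∃ v ∈ s, #(G.strandedBy s v) ≤ #(G.nbrsIn s v) := by
  by_cases hleaf : ∃ x ∈ s, ∃ z, G.nbrsIn s x = {z}
  · obtain ⟨x, hx, z, hxz⟩ := hleaf
    exact hG.exists_card_strandedBy_le_of_leaf hs hx hxz
  simp only [not_exists, not_and] at hleaf
  obtain ⟨v, hv⟩ := hne
  refine ⟨v, hv, hG.card_le_of_two_le_card_filter_adj (isIndepSet_strandedBy s v) fun x hx => ?_⟩
  have hxs := (mem_strandedBy.1 hx).1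
  have hne1 : #(G.nbrsIn s x) ≠ 1 := fun h => by
    obtain ⟨z, hz⟩ := card_eq_one.1 h
    exact hleaf x hxs z hz
  have hpos := card_pos.2 (hs x hxs)
  calc 2 ≤ #(G.nbrsIn s x) := by omega
    _ ≤ #{y ∈ G.nbrsIn s v | G.Adj x y} := card_le_card fun y hy =>
      have ⟨hys, hxy⟩ := mem_nbrsIn.1 hy
      mem_filter.2 ⟨mem_nbrsIn_of_mem_strandedBy_of_adj hx hys hxy, hxy⟩

theorem exists_indep_dominating_subset (hG : ClawFree G) (s : Finset V)
    (hs : ∀ v ∈ s, (G.nbrsIn s v).Nonempty) :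
    ∃ A ⊆ s, IsIndepSet G ↑A ∧ (∀ b ∈ s, b ∉ A → ∃ a ∈ A, G.Adj a b) ∧ 2 * #A ≤ #s := by
  induction s using Finset.strongInduction with
  | _ s ih =>
  rcases s.eq_empty_or_nonempty with rfl | hne
  · exact ⟨∅, subset_refl _, fun _ ha => absurd ha (notMem_empty _), by simp, by simp⟩
  obtain ⟨v, hv, hcard⟩ := hG.exists_card_strandedBy_le hne hs
  set N := G.nbrsIn s v
  set P := G.strandedBy s v
  have hTs : N ∪ P ⊆ s := union_subset (filter_subset _ _) (filter_subset _ _)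
  have hssub : s \ (N ∪ P) ⊂ s :=
    sdiff_ssubset hTs ⟨v, mem_union_right _ (self_mem_strandedBy hv)⟩
  obtain ⟨A', hA's, hA'indep, hA'dom, hA'card⟩ := ih _ hssub (nbrsIn_sdiff_nonempty v)
  have hA'N (a : V) (ha : a ∈ A') : a ∈ s ∧ a ∉ N ∧ a ∉ P := by
    simpa only [mem_sdiff, mem_union, not_or] using hA's ha
  have hPA' (x : V) (hx : x ∈ P) (a : V) (ha : a ∈ A') : ¬G.Adj x a := fun h =>
    (hA'N a ha).2.1 (mem_nbrsIn_of_mem_strandedBy_of_adj hx (hA'N a ha).1 h)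
  refine ⟨P ∪ A', union_subset (filter_subset _ _) (hA's.trans sdiff_subset), ?_, ?_, ?_⟩
  · intro a ha b hb
    rw [coe_union, Set.mem_union] at ha hb
    rcases ha with ha | ha <;> rcases hb with hb | hb
    · exact isIndepSet_strandedBy s v ha hb
    · exact hPA' a ha b hb
    · exact fun h => hPA' b hb a ha h.symm
    · exact hA'indep ha hb
  · intro b hbs hbA
    rw [mem_union, not_or] at hbA
    by_cases hbN : b ∈ N
    · exact ⟨v, mem_union_left _ (self_mem_strandedBy hv), (mem_nbrsIn.1 hbN).2⟩
    · have hb' : b ∈ s \ (N ∪ P) := mem_sdiff.2 ⟨hbs, by simp [hbN, hbA.1]⟩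
      obtain ⟨a, ha, hab⟩ := hA'dom b hb' hbA.2
      exact ⟨a, mem_union_right _ ha, hab⟩
  · have hT : #(N ∪ P) = #N + #P := card_union_of_disjoint disjoint_nbrsIn_strandedBy
    have hs' : #(s \ (N ∪ P)) = #s - #(N ∪ P) := card_sdiff_of_subset hTs
    have hA : #(P ∪ A') ≤ #P + #A' := card_union_le P A'
    have hTle : #(N ∪ P) ≤ #s := card_le_card hTs
    omega

end ClawFree

/-- a claw-free finite simple graph without isolated vertices admits a
minimal vertex cover of cardinality at least `n/2`; equivalently, it has a maximal
independent set of cardinality at most `n/2`. -/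
theorem statement9 {V : Type*} [Fintype V] (G : SimpleGraph V) (hG : ClawFree G)
    (hiso : HasNoIsolatedVertex G) :
    (∃ C : Set V, IsMinVertexCover G C ∧ Fintype.card V ≤ 2 * C.ncard) ∧
    (∃ A : Set V, IsMaxIndepSet G A ∧ 2 * A.ncard ≤ Fintype.card V) := by
  classical
  obtain ⟨A, -, hA, hdom, hcard⟩ := hG.exists_indep_dominating_subset univ fun v _ =>
    let ⟨w, hw⟩ := hiso v; ⟨w, mem_nbrsIn.2 ⟨mem_univ w, hw⟩⟩
  have hdom' : ∀ b ∉ (A : Set V), ∃ a ∈ (A : Set V), G.Adj a b :=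
    fun b hb => hdom b (mem_univ b) hb
  have hsum : (A : Set V).ncard + (A : Set V)ᶜ.ncard = Fintype.card V := by
    rw [Set.ncard_add_ncard_compl, Nat.card_eq_fintype_card]
  rw [Set.ncard_coe_finset] at hsum
  rw [card_univ] at hcard
  exact ⟨⟨_, hA.isMinVertexCover_compl_of_dominating hdom', by omega⟩,
    ⟨_, hA.isMaxIndepSet_of_dominating hdom', by rw [Set.ncard_coe_finset]; omega⟩⟩
end
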